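/- Let s, t be coprime integers greater than 1 and x ∈ ℤ. The map sending an s×t matrix m = (m_{ij}) with entries in {0,1} and exactly (st − s − t − 1)/2 − x entries equal to 1 to the partition with beta-set L_x ∪ { x − st + it + js : m_{ij} = 1 } (indices 1 ≤ i ≤ s, 1 ≤ j ≤ t) is a bijection onto the set of partitions having x as a pinch-point. -/

import Mathlib

/-- A partition, given as a weakly decreasing finitely-supported sequence of
natural numbers (`parts 0` is the first part). -/
structure SeqPartition where
  parts : ℕ →₀ ℕ
  antitone : ∀ ⦃i j : ℕ⦄, i ≤ j → parts j ≤ parts i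

namespace SeqPartition

/-- The size `|λ|` of a partition. -/
def size (l : SeqPartition) : ℕ := l.parts.sum fun _ v => v

/-- The beta-set `β(λ) = { λ_r − r : r ≥ 1 }` (here 0-indexed). -/
def betaSet (l : SeqPartition) : Set ℤ :=
  Set.range fun r : ℕ => (l.parts r : ℤ) - (r + 1)

/-- `RemoveHook h l m` : `m` is obtained from `l` by removing a rim `h`-hook;
in beta-set terms, an element `b` of `β(l)` is replaced by `b − h ∉ β(l)`. -/
def RemoveHook (h : ℕ) (l m : SeqPartition) : Prop :=
  ∃ b : ℤ, b ∈ l.betaSet ∧ b - (h : ℤ) ∉ l.betaSet ∧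
    m.betaSet = insert (b - (h : ℤ)) (l.betaSet \ {b})

/-- `l` is an `s`-core: no rim `s`-hook can be removed. -/
def IsCore (s : ℕ) (l : SeqPartition) : Prop := ∀ m : SeqPartition, ¬ RemoveHook s l m

/-- `c` is the `s`-core of `l`: it is obtained from `l` by repeatedly removing
rim `s`-hooks, and is itself an `s`-core. -/
def HasCore (s : ℕ) (l c : SeqPartition) : Prop :=
  Relation.ReflTransGen (RemoveHook s) l c ∧ IsCore s c

/-- `IsConj l m` : `m` is the conjugate partition of `l`. -/
def IsConj (l m : SeqPartition) : Prop :=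
  ∀ r : ℕ, m.parts r = Set.ncard {c : ℕ | r + 1 ≤ l.parts c}

end SeqPartition

/-- The region `U_x = { x + as + bt : a, b > 0 }`. -/
def UpSet (s t : ℕ) (x : ℤ) : Set ℤ :=
  {n : ℤ | ∃ a b : ℕ, 0 < a ∧ 0 < b ∧ n = x + (a : ℤ) * s + (b : ℤ) * t}

/-- The region `L_x = { x − as − bt : a, b ≥ 0 }`. -/
def LowSet (s t : ℕ) (x : ℤ) : Set ℤ :=
  {n : ℤ | ∃ a b : ℕ, n = x - (a : ℤ) * s - (b : ℤ) * t}

/-- `x` is a pinch-point for `l` : `L_x ⊆ β(l)` and `β(l) ∩ U_x = ∅`. -/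
def PinchPoint (s t : ℕ) (x : ℤ) (l : SeqPartition) : Prop :=
  LowSet s t x ⊆ l.betaSet ∧ l.betaSet ∩ UpSet s t x = ∅

/-- The generator `w_i` of the affine symmetric group `W_s` in its level-`t`
action on `ℤ` : `n ↦ n + t` if `n ≡ (i−1)t − (s−1)(t−1)/2 (mod s)`,
`n ↦ n − t` if `n ≡ it − (s−1)(t−1)/2 (mod s)`, and `n ↦ n` otherwise. -/
def wgen (s t : ℕ) (i : ℤ) : ℤ → ℤ := fun n =>
  if (s : ℤ) ∣ (n + ((s : ℤ) - 1) * ((t : ℤ) - 1) / 2 - (i - 1) * t) then n + t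
  else if (s : ℤ) ∣ (n + ((s : ℤ) - 1) * ((t : ℤ) - 1) / 2 - i * t) then n - t
  else n

/-- The monoid of maps `ℤ → ℤ` generated by the `wgen s t i`.  Since each
generator is an involution, this is the image of the level-`t` action
of the affine symmetric group `W_s` on `ℤ`. -/
def WMon (s t : ℕ) : Submonoid (Function.End ℤ) :=
  Submonoid.closure {f | ∃ i : ℤ, f = wgen s t i}

/-- `l` is `(s,t)`-minimal: no partition of smaller size has the same
`s`-core and `t`-core. -/
def MinimalPart (s t : ℕ) (l : SeqPartition) : Prop :=
  ∀ (m σ τ : SeqPartition), SeqPartition.HasCore s l σ → SeqPartition.HasCore t l τ →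
    SeqPartition.HasCore s m σ → SeqPartition.HasCore t m τ → l.size ≤ m.size


lemma Set.ncard_inter_Ici_of_mem {S : Set ℤ} {y : ℤ} (hy : y ∈ S)
    (hfin : (S ∩ Set.Ici (y + 1)).Finite) :
    (S ∩ Set.Ici y).ncard = (S ∩ Set.Ici (y + 1)).ncard + 1 := by
  rw [← Set.Ioi_insert, Set.inter_insert_of_mem hy,
    Set.ncard_insert_of_notMem (by simp) (by rwa [← Order.Ici_succ, Order.succ_eq_add_one]),
    ← Order.Ici_succ, Order.succ_eq_add_one]

namespace SeqPartition

instance : Inhabited SeqPartition := ⟨⟨0, fun _ _ _ => le_rfl⟩⟩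

lemma strictAnti_beta (l : SeqPartition) :
    StrictAnti fun r : ℕ => (l.parts r : ℤ) - (r + 1) :=
  strictAnti_nat_of_succ_lt fun r => by
    have := l.antitone (Nat.le_add_right r 1)
    push_cast
    omega

lemma betaSet_injective : Function.Injective betaSet := by
  rintro ⟨p, hp⟩ ⟨q, hq⟩ h
  have hpq := ((strictAnti_beta ⟨p, hp⟩).dual_right.range_inj
    (strictAnti_beta ⟨q, hq⟩).dual_right).1
      (by rw [Set.range_comp, Set.range_comp]; exact congrArg _ h)
  congr
  ext r
  have := congrFun hpq r
  simp only [Function.comp_apply, OrderDual.toDual_inj, sub_left_inj] at this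
  exact_mod_cast this

lemma exists_betaSet_eq_range {f : ℕ → ℤ} (hf : StrictAnti f) (N : ℕ)
    (hN : ∀ r, N ≤ r → f r = -(r + 1)) : ∃ l : SeqPartition, l.betaSet = Set.range f := by
  have hg : Antitone fun r : ℕ => f r + r := antitone_nat_of_succ_le fun r => by
    have := hf (Nat.lt_add_one r)
    push_cast
    omega
  have hpos : ∀ r, 0 ≤ f r + r + 1 := fun r => by
    rcases le_total r N with h | h
    · have : f N + N ≤ f r + r := hg h
      have := hN N le_rfl
      omega
    · have := hN r h
      omega
  let p : ℕ →₀ ℕ := Finsupp.onFinset (Finset.range N) (fun r => (f r + r + 1).toNat)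
    fun r hr => by
      rw [Finset.mem_range]
      by_contra h
      exact hr (by rw [hN r (by omega)]; simp)
  refine ⟨⟨p, fun i j hij => ?_⟩, ?_⟩
  · have := hg hij
    simp only [p, Finsupp.onFinset_apply] at this ⊢
    omega
  · unfold betaSet
    congr
    funext r
    have := hpos r
    simp only [p, Finsupp.onFinset_apply]
    omega

lemma exists_betaSet_eq {S : Set ℤ} {y : ℤ} (hlow : Set.Iio y ⊆ S)
    (hfin : (S ∩ Set.Ici y).Finite) (hcard : ((S ∩ Set.Ici y).ncard : ℤ) = -y) :
    ∃ l : SeqPartition, l.betaSet = S := by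
  set T := hfin.toFinset
  set k := T.card
  have hk : y = -k := by
    have : (S ∩ Set.Ici y).ncard = k := Set.ncard_eq_toFinset_card _ hfin
    omega
  have hT : ∀ n ∈ T, n ∈ S ∧ -(k : ℤ) ≤ n := fun n hn => by
    simpa [T, hk] using hn
  let e := T.orderIsoOfFin rfl
  -- the elements of `S ∩ [y, ∞)` in decreasing order, then `y - 1, y - 2, …`
  let f : ℕ → ℤ := fun r => if h : r < k then e ⟨k - 1 - r, by omega⟩ else -(r + 1)
  have hf : StrictAnti f := strictAnti_nat_of_succ_lt fun r => by
    by_cases h : r + 1 < k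
    · simp only [f, dif_pos h, dif_pos (Nat.lt_of_succ_lt h), Subtype.coe_lt_coe]
      exact e.strictMono (Fin.mk_lt_mk.2 (by omega))
    by_cases h' : r < k
    · simp only [f, dif_neg h, dif_pos h']
      have := (hT _ (e ⟨k - 1 - r, by omega⟩).2).2
      omega
    · simp only [f, dif_neg h, dif_neg h']
      omega
  obtain ⟨l, hl⟩ := exists_betaSet_eq_range hf k fun r hr => dif_neg (by omega)
  refine ⟨l, hl.trans (Set.ext fun n => ⟨?_, fun hn => ?_⟩)⟩
  · rintro ⟨r, rfl⟩
    by_cases h : r < k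
    · simpa only [f, dif_pos h] using (hT _ (e _).2).1
    · simp only [f, dif_neg h]
      exact hlow (by simp only [Set.mem_Iio]; omega)
  by_cases hny : n < y
  · refine ⟨(-n - 1).toNat, ?_⟩
    simp only [f, dif_neg (show ¬ (-n - 1).toNat < k by omega)]
    omega
  · have hnT : n ∈ T := by simpa [T] using ⟨hn, le_of_not_gt hny⟩
    set i := e.symm ⟨n, hnT⟩
    refine ⟨k - 1 - i, ?_⟩
    have hi : (⟨k - 1 - (k - 1 - i), by omega⟩ : Fin k) = i := Fin.ext (by simp; omega)
    simp only [f, dif_pos (show k - 1 - (i : ℕ) < k by omega), hi, i,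
      OrderIso.apply_symm_apply]

lemma finite_betaSet_inter_Ici (l : SeqPartition) (y : ℤ) : (l.betaSet ∩ Set.Ici y).Finite :=
  (Set.finite_Icc y (l.parts 0 - 1)).subset <| by
    rintro _ ⟨⟨r, rfl⟩, hy⟩
    exact ⟨hy, (l.strictAnti_beta.antitone (Nat.zero_le r)).trans (by simp)⟩

lemma exists_parts_eq_zero (l : SeqPartition) : ∃ N : ℕ, ∀ r, N ≤ r → l.parts r = 0 :=
  ⟨l.parts.support.sup id + 1, fun r hr => Finsupp.notMem_support_iff.1 fun hmem => by
    have := Finset.le_sup (f := id) hmem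
    simp only [id] at this
    omega⟩

lemma ncard_betaSet_inter_Ici_neg {l : SeqPartition} {N : ℕ}
    (hN : ∀ r, N ≤ r → l.parts r = 0) : (l.betaSet ∩ Set.Ici (-N)).ncard = N := by
  have : l.betaSet ∩ Set.Ici (-N) = (fun r : ℕ => (l.parts r : ℤ) - (r + 1)) '' Set.Iio N := by
    ext n
    simp only [betaSet, Set.mem_inter_iff, Set.mem_range, Set.mem_Ici, Set.mem_image,
      Set.mem_Iio]
    constructor
    · rintro ⟨⟨r, rfl⟩, hr⟩
      refine ⟨r, ?_, rfl⟩
      by_contra h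
      simp only [hN r (by omega)] at hr
      omega
    · rintro ⟨r, hr, rfl⟩
      have := l.strictAnti_beta hr
      simp only [hN N le_rfl] at this
      exact ⟨⟨r, rfl⟩, by push_cast at this ⊢; omega⟩
  rw [this, Set.ncard_image_of_injective _ l.strictAnti_beta.injective]
  simp

theorem ncard_betaSet_inter_Ici (l : SeqPartition) {y : ℤ} (hy : Set.Iio y ⊆ l.betaSet) :
    ((l.betaSet ∩ Set.Ici y).ncard : ℤ) = -y := by
  obtain ⟨N, hN⟩ := l.exists_parts_eq_zero
  have step : ∀ z ∈ l.betaSet, ((l.betaSet ∩ Set.Ici z).ncard : ℤ) =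
      (l.betaSet ∩ Set.Ici (z + 1)).ncard + 1 := fun z hz => by
    exact_mod_cast Set.ncard_inter_Ici_of_mem hz (l.finite_betaSet_inter_Ici _)
  have base : ((l.betaSet ∩ Set.Ici (-N)).ncard : ℤ) = -(-N) := by
    rw [ncard_betaSet_inter_Ici_neg hN, neg_neg]
  rcases le_total y (-N) with h | h
  · clear hy
    induction y, h using Int.leInductionDown with
    | base => exact base
    | pred z hz ih =>
      have hmem : z - 1 ∈ l.betaSet :=
        ⟨(-z).toNat, show (l.parts _ : ℤ) - _ = _ by rw [hN _ (by omega)]; omega⟩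
      have := step (z - 1) hmem
      rw [sub_add_cancel, ih] at this
      omega
  · induction y, h using Int.leInduction with
    | base => exact base
    | succ z hz ih =>
      have := step z (hy (by simp))
      rw [ih fun n hn => hy (by simp at hn ⊢; omega)] at this
      omega

end SeqPartition

section Lattice

variable {s t : ℕ} {x : ℤ}

def latticePt (s t : ℕ) (x i j : ℤ) : ℤ := x - s * t + i * t + j * s

lemma exists_latticePt_eq (hs : 0 < s) (hst : Nat.Coprime s t) (x n : ℤ) :
    ∃ i ∈ Set.Icc (1 : ℤ) s, ∃ j, latticePt s t x i j = n := by
  obtain ⟨u, v, huv⟩ := Nat.isCoprime_iff_coprime.2 hst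
  set d := n - x + s * t
  have hs' : (0 : ℤ) < s := by exact_mod_cast hs
  have h0 := Int.emod_nonneg (d * v - 1) hs'.ne'
  have h1 := Int.emod_lt_of_pos (d * v - 1) hs'
  have hdiv := Int.emod_def (d * v - 1) s
  refine ⟨(d * v - 1) % s + 1, ⟨by omega, by omega⟩, d * u + (d * v - 1) / s * t, ?_⟩
  simp only [latticePt, d] at hdiv ⊢
  linear_combination t * hdiv + (n - x + s * t) * huv

lemma latticePt_inj (hst : Nat.Coprime s t) {i j i' j' : ℤ} (hi : i ∈ Set.Icc (1 : ℤ) s)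
    (hi' : i' ∈ Set.Icc (1 : ℤ) s) (h : latticePt s t x i j = latticePt s t x i' j') :
    i = i' ∧ j = j' := by
  obtain ⟨hi1, his⟩ := hi
  obtain ⟨hi1', his'⟩ := hi'
  have hdvd : (s : ℤ) ∣ (i - i') * t := ⟨j' - j, by simp only [latticePt] at h; linarith⟩
  have hii : i = i' := sub_eq_zero.1 <|
    Int.eq_zero_of_abs_lt_dvd ((Nat.isCoprime_iff_coprime.2 hst).dvd_of_dvd_mul_right hdvd)
      (abs_lt.2 ⟨by omega, by omega⟩)
  subst hii
  refine ⟨rfl, mul_right_cancel₀ (b := (s : ℤ)) (by omega) ?_⟩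
  simp only [latticePt] at h
  linarith

lemma latticePt_mem_lowSet_iff (hst : Nat.Coprime s t) {i j : ℤ} (hi : i ∈ Set.Icc (1 : ℤ) s) :
    latticePt s t x i j ∈ LowSet s t x ↔ j ≤ 0 := by
  constructor
  · rintro ⟨a, b, hab⟩
    obtain ⟨q, r, hr, rfl⟩ : ∃ q r, r < s ∧ b = q * s + r :=
      ⟨b / s, b % s, Nat.mod_lt b (by have := hi.1; have := hi.2; omega),
        (Nat.div_add_mod' b s).symm⟩
    have h : latticePt s t x i j = latticePt s t x (s - r) (-a - q * t) := by
      rw [hab]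
      simp only [latticePt]
      push_cast
      ring
    rw [(latticePt_inj hst hi ⟨by omega, by omega⟩ h).2]
    have := Int.natCast_nonneg a
    have := Int.natCast_nonneg q
    have := Int.natCast_nonneg t
    nlinarith
  · intro hj
    refine ⟨(-j).toNat, (s - i).toNat, ?_⟩
    rw [Int.toNat_of_nonneg (by omega), Int.toNat_of_nonneg (by have := hi.2; omega)]
    simp only [latticePt]
    ring

lemma latticePt_mem_upSet_iff (hst : Nat.Coprime s t) {i j : ℤ} (hi : i ∈ Set.Icc (1 : ℤ) s) :
    latticePt s t x i j ∈ UpSet s t x ↔ (t : ℤ) < j := by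
  constructor
  · rintro ⟨a, b, ha, hb, hab⟩
    obtain ⟨q, r, hr, rfl⟩ : ∃ q r, r < s ∧ b = q * s + r + 1 :=
      ⟨(b - 1) / s, (b - 1) % s, Nat.mod_lt _ (by have := hi.1; have := hi.2; omega),
        by have := Nat.div_add_mod' (b - 1) s; omega⟩
    have h : latticePt s t x i j = latticePt s t x (r + 1) (a + (q + 1) * t) := by
      rw [hab]
      simp only [latticePt]
      push_cast
      ring
    rw [(latticePt_inj hst hi ⟨by omega, by omega⟩ h).2]
    have := Int.natCast_nonneg q
    have := Int.natCast_nonneg t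
    have : (1 : ℤ) ≤ a := by exact_mod_cast ha
    nlinarith
  · intro hj
    refine ⟨(j - t).toNat, i.toNat, by omega, by have := hi.1; omega, ?_⟩
    rw [Int.toNat_of_nonneg (by omega), Int.toNat_of_nonneg (by have := hi.1; omega)]
    simp only [latticePt]
    ring

end Lattice

section Cells

variable {s t : ℕ} {x : ℤ}

def cell (s t : ℕ) (x : ℤ) (p : Fin s × Fin t) : ℤ :=
  latticePt s t x ((p.1 : ℕ) + 1) ((p.2 : ℕ) + 1)

lemma cell_injective (hst : Nat.Coprime s t) : Function.Injective (cell s t x) := by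
  rintro ⟨i, j⟩ ⟨i', j'⟩ h
  have := (latticePt_inj hst ⟨by omega, by omega⟩ ⟨by omega, by omega⟩ h)
  ext <;> simp only at this ⊢ <;> omega

lemma cell_notMem_lowSet (hst : Nat.Coprime s t) (p : Fin s × Fin t) :
    cell s t x p ∉ LowSet s t x := by
  rw [cell, latticePt_mem_lowSet_iff hst ⟨by omega, by omega⟩]
  omega

lemma cell_notMem_upSet (hst : Nat.Coprime s t) (p : Fin s × Fin t) :
    cell s t x p ∉ UpSet s t x := by
  rw [cell, latticePt_mem_upSet_iff hst ⟨by omega, by omega⟩]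
  omega

lemma cell_mem_Icc (p : Fin s × Fin t) :
    cell s t x p ∈ Set.Icc (x - s * t + s + t) (x + s * t) := by
  have hi : ((p.1 : ℕ) : ℤ) + 1 ≤ s := by omega
  have hj : ((p.2 : ℕ) : ℤ) + 1 ≤ t := by omega
  have := Int.natCast_nonneg (p.1 : ℕ)
  have := Int.natCast_nonneg (p.2 : ℕ)
  constructor <;> simp only [cell, latticePt] <;> nlinarith

lemma mem_lowSet_or_mem_upSet_or_mem_range_cell (hs : 0 < s) (hst : Nat.Coprime s t) (n : ℤ) :
    n ∈ LowSet s t x ∨ n ∈ UpSet s t x ∨ n ∈ Set.range (cell s t x) := by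
  obtain ⟨i, hi, j, rfl⟩ := exists_latticePt_eq hs hst x n
  rw [latticePt_mem_lowSet_iff hst hi, latticePt_mem_upSet_iff hst hi]
  obtain ⟨hi1, his⟩ := hi
  by_cases hj : 0 < j ∧ j ≤ t
  · refine Or.inr (Or.inr ⟨(⟨(i - 1).toNat, by omega⟩, ⟨(j - 1).toNat, by omega⟩), ?_⟩)
    simp only [cell]
    congr <;> omega
  · omega

lemma disjoint_lowSet_upSet (hs : 0 < s) : Disjoint (LowSet s t x) (UpSet s t x) := by
  rw [Set.disjoint_left]
  rintro _ ⟨a, b, rfl⟩ ⟨a', b', ha', hb', h⟩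
  have : (0 : ℤ) < (a + a') * s := by
    have : 0 < a + a' := by omega
    positivity
  have := Int.natCast_nonneg ((b + b') * t)
  push_cast at *
  linarith

lemma lowSet_subset_Iic : LowSet s t x ⊆ Set.Iic x := by
  rintro _ ⟨a, b, rfl⟩
  simp only [Set.mem_Iic]
  have := Int.natCast_nonneg (a * s)
  have := Int.natCast_nonneg (b * t)
  push_cast at *
  linarith

lemma Iio_subset_lowSet (hs : 0 < s) (hst : Nat.Coprime s t) :
    Set.Iio (x - s * t + s + t) ⊆ LowSet s t x := by
  intro n hn
  obtain ⟨i, hi, j, rfl⟩ := exists_latticePt_eq hs hst x n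
  rw [latticePt_mem_lowSet_iff hst hi]
  by_contra! hj
  simp only [Set.mem_Iio, latticePt] at hn
  have := Int.natCast_nonneg t
  nlinarith [hi.1]

lemma image_lowSet_reflect :
    (fun n => (2 * x + s + t) - n) '' LowSet s t x = UpSet s t x := by
  ext n
  constructor
  · rintro ⟨_, ⟨a, b, rfl⟩, rfl⟩
    exact ⟨a + 1, b + 1, by omega, by omega, by push_cast; ring⟩
  · rintro ⟨a, b, ha, hb, rfl⟩
    refine ⟨x - (a - 1 : ℕ) * s - (b - 1 : ℕ) * t, ⟨a - 1, b - 1, rfl⟩, ?_⟩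
    push_cast [Nat.cast_sub ha, Nat.cast_sub hb]
    ring

theorem two_mul_ncard_lowSet_inter_Ici (hs : 0 < s) (ht : 0 < t) (hst : Nat.Coprime s t) :
    2 * ((LowSet s t x ∩ Set.Ici (x - s * t + s + t)).ncard : ℤ) = s * t - s - t + 1 := by
  set I := Set.Icc (x - s * t + s + t) (x + s * t)
  have hI : I.Finite := Set.finite_Icc _ _
  have hLI : LowSet s t x ∩ Set.Ici (x - s * t + s + t) = LowSet s t x ∩ I := by
    ext n
    simp only [Set.mem_inter_iff, Set.mem_Ici, I, Set.mem_Icc]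
    constructor
    · rintro ⟨hn, hy⟩
      have := lowSet_subset_Iic hn
      have := Int.natCast_nonneg (s * t)
      push_cast at *
      exact ⟨hn, hy, by simp only [Set.mem_Iic] at *; linarith⟩
    · exact fun ⟨hn, hy, _⟩ => ⟨hn, hy⟩
  have hUI : UpSet s t x ∩ I = (fun n => (2 * x + s + t) - n) '' (LowSet s t x ∩ I) := by
    simp only [I]
    rw [Set.image_inter sub_right_injective, image_lowSet_reflect, Set.image_const_sub_Icc]
    congr 2 <;> ring
  have hcover : I = (LowSet s t x ∩ I) ∪ (UpSet s t x ∩ I) ∪ Set.range (cell s t x) := by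
    refine Set.Subset.antisymm (fun n hn => ?_) ?_
    · rcases mem_lowSet_or_mem_upSet_or_mem_range_cell hs hst n with h | h | h
      exacts [Or.inl (Or.inl ⟨h, hn⟩), Or.inl (Or.inr ⟨h, hn⟩), Or.inr h]
    · rintro n ((⟨-, hn⟩ | ⟨-, hn⟩) | ⟨p, rfl⟩)
      exacts [hn, hn, cell_mem_Icc p]
  have hcardI : (I.ncard : ℤ) = 2 * s * t - s - t + 1 := by
    simp only [I]
    rw [← Finset.coe_Icc, Set.ncard_coe_finset, Int.card_Icc_of_le _ _ (by nlinarith)]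
    ring
  have hdisj : Disjoint (LowSet s t x ∩ I ∪ UpSet s t x ∩ I) (Set.range (cell s t x)) := by
    rw [Set.disjoint_right]
    rintro _ ⟨p, rfl⟩ (⟨h, -⟩ | ⟨h, -⟩)
    exacts [cell_notMem_lowSet hst p h, cell_notMem_upSet hst p h]
  rw [hcover, Set.ncard_union_eq hdisj (hI.subset (by simp)) (Set.finite_range _),
    Set.ncard_union_eq ((disjoint_lowSet_upSet hs).mono Set.inter_subset_left
      Set.inter_subset_left) (hI.subset Set.inter_subset_right) (hI.subset Set.inter_subset_right),
    hUI, Set.ncard_image_of_injective _ sub_right_injective,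
    Set.ncard_range_of_injective (cell_injective hst)] at hcardI
  rw [hLI]
  simp only [Nat.card_eq_fintype_card, Fintype.card_prod, Fintype.card_fin] at hcardI
  push_cast at hcardI
  linarith

end Cells

section Matrices

variable {s t : ℕ} {x : ℤ}

def onesCount (m : Fin s → Fin t → Bool) : ℕ :=
  (Finset.univ.filter fun p : Fin s × Fin t => m p.1 p.2 = true).card

def cells (s t : ℕ) (x : ℤ) (m : Fin s → Fin t → Bool) : Set ℤ :=
  {b | ∃ (i : Fin s) (j : Fin t), m i j = true ∧ b = cell s t x (i, j)}

lemma cells_eq_image (m : Fin s → Fin t → Bool) :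
    cells s t x m = cell s t x '' {p | m p.1 p.2 = true} := by
  ext b
  constructor
  · rintro ⟨i, j, h, rfl⟩
    exact ⟨(i, j), h, rfl⟩
  · rintro ⟨p, h, rfl⟩
    exact ⟨p.1, p.2, h, rfl⟩

lemma ncard_cells (hst : Nat.Coprime s t) (m : Fin s → Fin t → Bool) :
    (cells s t x m).ncard = onesCount m := by
  rw [cells_eq_image, Set.ncard_image_of_injective _ (cell_injective hst), onesCount,
    ← Set.ncard_coe_finset]
  simp

lemma cell_mem_lowSet_union_cells_iff (hst : Nat.Coprime s t) (m : Fin s → Fin t → Bool)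
    (p : Fin s × Fin t) : cell s t x p ∈ LowSet s t x ∪ cells s t x m ↔ m p.1 p.2 = true := by
  rw [Set.mem_union, or_iff_right (cell_notMem_lowSet hst p), cells_eq_image,
    (cell_injective hst).mem_set_image]
  rfl

lemma lowSet_union_cells_inter_Ici (m : Fin s → Fin t → Bool) :
    (LowSet s t x ∪ cells s t x m) ∩ Set.Ici (x - s * t + s + t) =
      (LowSet s t x ∩ Set.Ici (x - s * t + s + t)) ∪ cells s t x m := by
  rw [Set.union_inter_distrib_right]
  congr 1
  refine Set.inter_eq_left.2 ?_
  rintro _ ⟨i, j, -, rfl⟩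
  exact (cell_mem_Icc (i, j)).1

lemma finite_lowSet_union_cells_inter_Ici (m : Fin s → Fin t → Bool) (y : ℤ) :
    ((LowSet s t x ∪ cells s t x m) ∩ Set.Ici y).Finite := by
  refine ((Set.finite_Icc y x).union ((Set.finite_range (cell s t x)))).subset ?_
  rintro n ⟨hn | ⟨i, j, -, rfl⟩, hy⟩
  exacts [Or.inl ⟨hy, lowSet_subset_Iic hn⟩, Or.inr ⟨(i, j), rfl⟩]

lemma two_mul_ncard_lowSet_union_cells_inter_Ici (hs : 0 < s) (ht : 0 < t)
    (hst : Nat.Coprime s t) (m : Fin s → Fin t → Bool) :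
    2 * (((LowSet s t x ∪ cells s t x m) ∩ Set.Ici (x - s * t + s + t)).ncard : ℤ) =
      s * t - s - t + 1 + 2 * onesCount m := by
  have hfin := finite_lowSet_union_cells_inter_Ici (x := x) m (x - s * t + s + t)
  rw [lowSet_union_cells_inter_Ici] at hfin ⊢
  have hdisj : Disjoint (LowSet s t x ∩ Set.Ici (x - s * t + s + t)) (cells s t x m) := by
    rw [Set.disjoint_right]
    rintro _ ⟨i, j, -, rfl⟩ ⟨h, -⟩
    exact cell_notMem_lowSet hst _ h
  rw [Set.ncard_union_eq hdisj (hfin.subset Set.subset_union_left)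
    (hfin.subset Set.subset_union_right), ncard_cells hst]
  push_cast
  linarith [two_mul_ncard_lowSet_inter_Ici (x := x) hs ht hst]

lemma exists_betaSet_eq_lowSet_union_cells (hs : 0 < s) (ht : 0 < t) (hst : Nat.Coprime s t)
    {m : Fin s → Fin t → Bool} (hm : 2 * (onesCount m : ℤ) = s * t - s - t - 1 - 2 * x) :
    ∃ l : SeqPartition, l.betaSet = LowSet s t x ∪ cells s t x m :=
  SeqPartition.exists_betaSet_eq ((Iio_subset_lowSet hs hst).trans Set.subset_union_left)
    (finite_lowSet_union_cells_inter_Ici m _)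
    (by linarith [two_mul_ncard_lowSet_union_cells_inter_Ici (x := x) hs ht hst m])

lemma two_mul_onesCount_of_betaSet_eq (hs : 0 < s) (ht : 0 < t) (hst : Nat.Coprime s t)
    {m : Fin s → Fin t → Bool} {l : SeqPartition}
    (h : l.betaSet = LowSet s t x ∪ cells s t x m) :
    2 * (onesCount m : ℤ) = s * t - s - t - 1 - 2 * x := by
  have := l.ncard_betaSet_inter_Ici (h ▸ (Iio_subset_lowSet hs hst).trans Set.subset_union_left)
  rw [h] at this
  linarith [two_mul_ncard_lowSet_union_cells_inter_Ici (x := x) hs ht hst m]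

lemma pinchPoint_of_betaSet_eq (hs : 0 < s) (hst : Nat.Coprime s t)
    {m : Fin s → Fin t → Bool} {l : SeqPartition}
    (h : l.betaSet = LowSet s t x ∪ cells s t x m) : PinchPoint s t x l := by
  refine ⟨h ▸ Set.subset_union_left, Set.eq_empty_iff_forall_notMem.2 ?_⟩
  rintro n ⟨hn, hu⟩
  rw [h] at hn
  rcases hn with hn | ⟨i, j, -, rfl⟩
  exacts [Set.disjoint_left.1 (disjoint_lowSet_upSet hs) hn hu, cell_notMem_upSet hst _ hu]

lemma eq_of_lowSet_union_cells_eq (hst : Nat.Coprime s t) {m m' : Fin s → Fin t → Bool}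
    (h : LowSet s t x ∪ cells s t x m = LowSet s t x ∪ cells s t x m') : m = m' := by
  funext i j
  rw [Bool.eq_iff_iff, ← cell_mem_lowSet_union_cells_iff hst m (i, j), h,
    cell_mem_lowSet_union_cells_iff hst]

open Classical in
lemma betaSet_eq_of_pinchPoint (hs : 0 < s) (hst : Nat.Coprime s t) {l : SeqPartition}
    (hl : PinchPoint s t x l) :
    l.betaSet = LowSet s t x ∪ cells s t x fun i j => decide (cell s t x (i, j) ∈ l.betaSet) := by
  ext n
  constructor
  · intro hn
    rcases mem_lowSet_or_mem_upSet_or_mem_range_cell (x := x) hs hst n with h | h | ⟨p, rfl⟩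
    · exact Or.inl h
    · exact (Set.notMem_empty n (hl.2 ▸ ⟨hn, h⟩)).elim
    · exact Or.inr ⟨p.1, p.2, by simpa using hn, rfl⟩
  · rintro (h | ⟨i, j, hij, rfl⟩)
    exacts [hl.1 h, of_decide_eq_true hij]

end Matrices

theorem stmt11_general (s t : ℕ) (hs : 1 < s) (hst : Nat.Coprime s t) (x : ℤ) :
    ∃ θ : (Fin s → Fin t → Bool) → SeqPartition,
      Set.BijOn θ
        {m : Fin s → Fin t → Bool |
          2 * (((Finset.univ.filter fun p : Fin s × Fin t => m p.1 p.2 = true).card : ℤ))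
            = (s : ℤ) * t - s - t - 1 - 2 * x}
        {l : SeqPartition | PinchPoint s t x l} ∧
      ∀ m : Fin s → Fin t → Bool,
        2 * (((Finset.univ.filter fun p : Fin s × Fin t => m p.1 p.2 = true).card : ℤ))
            = (s : ℤ) * t - s - t - 1 - 2 * x →
        (θ m).betaSet = LowSet s t x ∪
          {b : ℤ | ∃ (i : Fin s) (j : Fin t), m i j = true ∧
            b = x - (s : ℤ) * t + ((i : ℕ) + 1) * t + ((j : ℕ) + 1) * s} := by
  have hs₀ : 0 < s := by omega
  have ht : 0 < t := Nat.pos_of_ne_zero fun h => by simp [h] at hst; omega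
  choose! θ hθ using fun m (hm : 2 * (onesCount m : ℤ) = s * t - s - t - 1 - 2 * x) =>
    exists_betaSet_eq_lowSet_union_cells hs₀ ht hst hm
  refine ⟨θ, ⟨fun m hm => pinchPoint_of_betaSet_eq hs₀ hst (hθ m hm),
    fun m hm m' hm' h => eq_of_lowSet_union_cells_eq hst (by rw [← hθ m hm, ← hθ m' hm', h]),
    fun l hl => ?_⟩, hθ⟩
  have hβ := betaSet_eq_of_pinchPoint hs₀ hst hl
  have hm := two_mul_onesCount_of_betaSet_eq hs₀ ht hst hβ
  exact ⟨_, hm, SeqPartition.betaSet_injective ((hθ _ hm).trans hβ.symm)⟩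

/-- the bijection between `s×t` (0,1)-matrices with
`(st−s−t−1)/2 − x` entries equal to 1 and partitions with pinch-point `x`. -/
theorem stmt11 (s t : ℕ) (hs : 1 < s) (ht : 1 < t) (hst : Nat.Coprime s t) (x : ℤ) :
    ∃ θ : (Fin s → Fin t → Bool) → SeqPartition,
      Set.BijOn θ
        {m : Fin s → Fin t → Bool |
          2 * (((Finset.univ.filter fun p : Fin s × Fin t => m p.1 p.2 = true).card : ℤ))
            = (s : ℤ) * t - s - t - 1 - 2 * x}
        {l : SeqPartition | PinchPoint s t x l} ∧
      ∀ m : Fin s → Fin t → Bool,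
        2 * (((Finset.univ.filter fun p : Fin s × Fin t => m p.1 p.2 = true).card : ℤ))
            = (s : ℤ) * t - s - t - 1 - 2 * x →
        (θ m).betaSet = LowSet s t x ∪
          {b : ℤ | ∃ (i : Fin s) (j : Fin t), m i j = true ∧
            b = x - (s : ℤ) * t + ((i : ℕ) + 1) * t + ((j : ℕ) + 1) * s} :=
  stmt11_general s t hs hst x
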